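/- The constants C̃ = log 2 − 3/4 + (1/162)·(3^{1/4}·√(2π)·(2 + 3·artanh(1/2)) − 12)² and C_BHS = 2·log 2 + (1/2)·log(2/3) + 3·log(√π/Γ(1/3)) satisfy log 2 − 3/4 < C̃ < C_BHS, where Γ is the Gamma function. -/

import Mathlib

open MeasureTheory Real Filter Set

noncomputable section


/-- The inverse hyperbolic tangent. -/
noncomputable def artanh (x : ℝ) : ℝ := (1/2) * Real.log ((1 + x) / (1 - x))

/-- The constant `C̃ = log 2 − 3/4 + (1/162)·(3^{1/4}·√(2π)·(2 + 3·artanh(1/2)) − 12)²`. -/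
noncomputable def Ctilde : ℝ :=
  Real.log 2 - 3/4 +
    (1/162) * ((3:ℝ) ^ ((1:ℝ)/4) * Real.sqrt (2*π) * (2 + 3 * _root_.artanh (1/2)) - 12) ^ 2

/-- The Brauchart–Hardin–Saff constant `C_BHS = 2 log 2 + (1/2) log(2/3) + 3 log(√π/Γ(1/3))`. -/
noncomputable def CBHS : ℝ :=
  2 * Real.log 2 + (1/2) * Real.log (2/3) + 3 * Real.log (Real.sqrt π / Real.Gamma (1/3))

/-- Auxiliary product `∏_{k<n} (3k+1)`. -/
def Pfun : ℕ → ℕ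
  | 0 => 1
  | n+1 => Pfun n * (3*n+1)

lemma Pfun_pos (n : ℕ) : 0 < Pfun n := by
  induction n with
  | zero => simp [Pfun]
  | succ n ih => simp only [Pfun]; positivity

lemma gamma_pfun (n : ℕ) : Real.Gamma (n + 1/3) * 3^n = Real.Gamma (1/3) * Pfun n := by
  induction n with
  | zero => simp [Pfun]
  | succ n ih =>
    have h0 : ((n:ℝ) + 1/3) ≠ 0 := by positivity
    have he : ((n+1 : ℕ) : ℝ) + 1/3 = ((n:ℝ) + 1/3) + 1 := by push_cast; ring
    rw [he, Real.Gamma_add_one h0]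
    have hp : (Pfun (n+1) : ℝ) = (Pfun n : ℝ) * (3*(n:ℝ)+1) := by
      simp only [Pfun]; push_cast; ring
    rw [hp, pow_succ]
    linear_combination ((3*(n:ℝ)+1)) * ih

lemma gamma_cube_le : (Real.Gamma (400 + 1/3))^3 ≤ 400 * (Real.Gamma 400)^3 := by
  have hc := Real.convexOn_log_Gamma
  have h := hc.2 (show (400:ℝ) ∈ Ioi 0 by norm_num) (show (401:ℝ) ∈ Ioi 0 by norm_num)
      (by norm_num : (0:ℝ) ≤ 2/3) (by norm_num : (0:ℝ) ≤ 1/3) (by norm_num)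
  simp only [smul_eq_mul, Function.comp_apply] at h
  have he : (2/3 : ℝ) * 400 + (1/3) * 401 = 400 + 1/3 := by norm_num
  rw [he] at h
  have h401 : Real.Gamma (401:ℝ) = 400 * Real.Gamma 400 := by
    have := Real.Gamma_add_one (s := (400:ℝ)) (by norm_num)
    norm_num at this ⊢
  have hg400 : 0 < Real.Gamma (400:ℝ) := Real.Gamma_pos_of_pos (by norm_num)
  have hg : 0 < Real.Gamma (400 + 1/3 : ℝ) := Real.Gamma_pos_of_pos (by norm_num)
  rw [h401, Real.log_mul (by norm_num) (ne_of_gt hg400)] at h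
  rw [← Real.log_le_log_iff (by positivity) (by positivity),
    Real.log_mul (by norm_num) (by positivity), Real.log_pow, Real.log_pow]
  push_cast
  linarith [h]

set_option maxRecDepth 10000 in
lemma Pfun_nat_ineq : 500*(400*(Nat.factorial 399)^3*3^1200) ≤ 9621*(Pfun 400)^3 := by decide

lemma G3_le : (Real.Gamma (1/3))^3 ≤ 9621/500 := by
  have hp := gamma_pfun 400
  have hfac2 : Real.Gamma ((399:ℕ)+(1:ℝ)) = Nat.factorial 399 := Real.Gamma_nat_eq_factorial 399
  have hnatR : (500:ℝ)*(400*((Nat.factorial 399 : ℕ):ℝ)^3*3^1200) ≤ 9621*((Pfun 400 : ℕ):ℝ)^3 := by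
    exact_mod_cast Pfun_nat_ineq
  have hP : (0:ℝ) < ((Pfun 400 : ℕ):ℝ)^3 := by
    have := Pfun_pos 400
    positivity
  have hcube : (Real.Gamma (1/3))^3 * ((Pfun 400 : ℕ):ℝ)^3
      = (Real.Gamma ((400:ℕ) + 1/3))^3 * ((3:ℝ)^400)^3 := by
    rw [← mul_pow, ← mul_pow, hp]
  have h400 : Real.Gamma ((400:ℕ) + 1/3 : ℝ) = Real.Gamma (400 + 1/3 : ℝ) := by norm_num
  have hG400 : Real.Gamma (400:ℝ) = ((Nat.factorial 399 : ℕ):ℝ) := by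
    rw [← hfac2]; norm_num
  have hle : (Real.Gamma (1/3))^3 * ((Pfun 400 : ℕ):ℝ)^3
      ≤ 400 * ((Nat.factorial 399 : ℕ):ℝ)^3 * ((3:ℝ)^400)^3 := by
    rw [hcube, h400]
    have h1 := gamma_cube_le
    rw [hG400] at h1
    have h3pos : (0:ℝ) < ((3:ℝ)^400)^3 := by positivity
    exact mul_le_mul_of_nonneg_right h1 h3pos.le
  have h3e : ((3:ℝ)^400)^3 = (3:ℝ)^1200 := by rw [← pow_mul]
  rw [h3e] at hle
  generalize (3:ℝ)^1200 = T at hle hnatR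
  generalize ((Nat.factorial 399 : ℕ):ℝ)^3 = F at hle hnatR
  generalize ((Pfun 400 : ℕ):ℝ)^3 = P at hle hnatR hP ⊢
  generalize (Real.Gamma (1/3))^3 = G at hle ⊢
  exact le_of_mul_le_mul_right (by linarith [hle, hnatR] : G * P ≤ 9621/500 * P) hP

set_option maxHeartbeats 2000000 in
/-- `log 2 − 3/4 < C̃ < C_BHS`. -/
theorem Ctilde_between : Real.log 2 - 3/4 < Ctilde ∧ Ctilde < CBHS := by
  have h2l : (0.6931471803:ℝ) < Real.log 2 := Real.log_two_gt_d9
  have h2u : Real.log 2 < 0.6931471808 := Real.log_two_lt_d9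
  -- log 3 bounds
  have h3eq : 12 * Real.log 3 = 19 * Real.log 2 + Real.log ((531441:ℝ)/524288) := by
    rw [show ((531441:ℝ)/524288) = 3^(12:ℕ)/2^(19:ℕ) by norm_num,
      Real.log_div (by positivity) (by positivity), Real.log_pow, Real.log_pow]
    push_cast; ring
  have hy1 : Real.log ((531441:ℝ)/524288) ≤ 7153/524288 :=
    le_trans (Real.log_le_sub_one_of_pos (by norm_num)) (by norm_num)
  have hy2 : (7153:ℝ)/531441 ≤ Real.log ((531441:ℝ)/524288) := by
    have := Real.one_sub_inv_le_log_of_pos (x := (531441:ℝ)/524288) (by norm_num)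
    refine le_trans ?_ this
    norm_num
  have h3l : (1.0986046:ℝ) < Real.log 3 := by linarith
  have h3u : Real.log 3 < 1.09862 := by linarith
  -- artanh
  have hart : _root_.artanh (1/2) = Real.log 3 / 2 := by
    unfold _root_.artanh; norm_num; ring
  obtain ⟨c, hcdef⟩ : ∃ c : ℝ, c = 2 + 3 * _root_.artanh (1/2) := ⟨_, rfl⟩
  have hcl : (36479:ℝ)/10000 < c := by rw [hcdef, hart]; linarith
  have hcu : c < (364793:ℝ)/100000 := by rw [hcdef, hart]; linarith
  have hc0 : (0:ℝ) < c := by linarith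
  -- X and its fourth power
  obtain ⟨X, hXdef⟩ : ∃ X : ℝ, X = (3:ℝ) ^ ((1:ℝ)/4) * Real.sqrt (2*π) * c := ⟨_, rfl⟩
  have hX0 : 0 ≤ X := by
    rw [hXdef]
    have := Real.pi_pos
    positivity
  have hX4 : X^(4:ℕ) = 12 * π^2 * c^4 := by
    rw [hXdef]
    have h34 : ((3:ℝ) ^ ((1:ℝ)/4)) ^ (4:ℕ) = 3 := by
      rw [← Real.rpow_natCast ((3:ℝ) ^ ((1:ℝ)/4)) 4, ← Real.rpow_mul (by norm_num)]
      norm_num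
    have hs4 : (Real.sqrt (2*π)) ^ (4:ℕ) = 4*π^2 := by
      have h : (Real.sqrt (2*π))^(4:ℕ) = ((Real.sqrt (2*π))^2)^2 := by ring
      rw [h, Real.sq_sqrt (by positivity)]; ring
    rw [mul_pow, mul_pow, h34, hs4]; ring
  have hπl : (3.141592:ℝ) < π := Real.pi_gt_d6
  have hπu : π < 3.141593 := Real.pi_lt_d6
  have hπ0 : (0:ℝ) < π := Real.pi_pos
  have hp2l : ((3141592:ℝ)/1000000)^2 < π^2 := by
    apply pow_lt_pow_left₀ (by norm_num at hπl ⊢; linarith) (by norm_num)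
    norm_num
  have hp2u : π^2 < ((3141593:ℝ)/1000000)^2 := by
    apply pow_lt_pow_left₀ (by norm_num at hπu ⊢; linarith) (by positivity)
    norm_num
  have hc4l : ((36479:ℝ)/10000)^4 < c^4 := by
    apply pow_lt_pow_left₀ hcl (by norm_num)
    norm_num
  have hc4u : c^4 < ((364793:ℝ)/100000)^4 := by
    apply pow_lt_pow_left₀ hcu (by linarith)
    norm_num
  have hmul_l : ((3141592:ℝ)/1000000)^2 * ((36479:ℝ)/10000)^4 < π^2 * c^4 :=
    mul_lt_mul'' hp2l hc4l (by positivity) (by positivity)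
  have hmul_u : π^2 * c^4 < ((3141593:ℝ)/1000000)^2 * ((364793:ℝ)/100000)^4 :=
    mul_lt_mul'' hp2u hc4u (by positivity) (by positivity)
  have hXl : (12:ℝ) < X := by
    apply lt_of_pow_lt_pow_left₀ 4 hX0
    rw [hX4]
    nlinarith [hmul_l]
  have hXu : X < 1204/100 := by
    apply lt_of_pow_lt_pow_left₀ 4 (by norm_num)
    rw [hX4]
    nlinarith [hmul_u]
  have hsq_pos : 0 < (X - 12)^2 := by exact pow_pos (by linarith : (0:ℝ) < X - 12) 2
  constructor
  · -- left inequality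
    have : Real.log 2 - 3/4 + (1/162) * (X - 12)^2 > Real.log 2 - 3/4 := by nlinarith [hsq_pos]
    unfold Ctilde
    rw [← hcdef, ← hXdef]
    linarith
  · -- right inequality
    have hsq : (X - 12)^2 < 1/625 := by
      have h1 : X - 12 < 1/25 := by linarith
      have h2 : (0:ℝ) ≤ X - 12 := by linarith
      nlinarith [h1, h2]
    -- log pi
    have hπeq : Real.log (((392699:ℝ)/125000)^20/2^33)
        = 20 * Real.log (392699/125000) - 33*Real.log 2 := by
      rw [Real.log_div (by positivity) (by positivity), Real.log_pow, Real.log_pow]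
      push_cast; ring
    have hxπ : (205230:ℝ)/10^7 ≤ Real.log (((392699:ℝ)/125000)^20/2^33) := by
      have := Real.one_sub_inv_le_log_of_pos (x := ((392699:ℝ)/125000)^20/2^33) (by positivity)
      refine le_trans ?_ this
      norm_num
    have hπlog : Real.log ((392699:ℝ)/125000) ≤ Real.log π :=
      Real.log_le_log (by norm_num) (by norm_num at hπl ⊢; linarith)
    -- Gamma bound
    have hΓpos : 0 < Real.Gamma (1/3 : ℝ) := Real.Gamma_pos_of_pos (by norm_num)
    have hG : Real.log ((Real.Gamma (1/3))^(3:ℕ)) ≤ Real.log ((9621:ℝ)/500) :=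
      Real.log_le_log (by positivity) G3_le
    rw [Real.log_pow] at hG
    have hq0eq : Real.log (((9621:ℝ)/500)^15/2^64)
        = 15 * Real.log (9621/500) - 64*Real.log 2 := by
      rw [Real.log_div (by positivity) (by positivity), Real.log_pow, Real.log_pow]
      push_cast; ring
    have hx6 : Real.log (((9621:ℝ)/500)^15/2^64) ≤ -(49762:ℝ)/10^7 := by
      have := Real.log_le_sub_one_of_pos (x := ((9621:ℝ)/500)^15/2^64) (by positivity)
      refine le_trans this ?_
      norm_num
    -- unfold CBHS
    have hCB : CBHS = 2 * Real.log 2 + (1/2) * (Real.log 2 - Real.log 3)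
        + 3 * (Real.log π / 2 - Real.log (Real.Gamma (1/3))) := by
      unfold CBHS
      rw [Real.log_div (by positivity) (ne_of_gt hΓpos), Real.log_sqrt Real.pi_pos.le,
        Real.log_div (by norm_num) (by norm_num)]
    unfold Ctilde
    rw [← hcdef, ← hXdef, hCB]
    push_cast at hG hq0eq hπeq ⊢
    linarith [hsq, hG, hq0eq, hx6, hπeq, hxπ, hπlog, h3eq, hy1, h2l, h2u]
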